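/- Let A be an alternating automaton and let A′ be obtained from A by replacing some of its transition conditions by equivalent positive boolean formulas. Then the nondeterminism in A is history-deterministic if and only if the nondeterminism in A′ is history-deterministic, and the universality in A is history-deterministic if and only if the universality in A′ is history-deterministic. -/

import Mathlib

set_option maxHeartbeats 1000000

namespace GFG

/-- Positive boolean formulas over `Q`. -/
inductive PB (Q : Type) : Type
  | atom : Q → PB Q
  | and : PB Q → PB Q → PB Q
  | or : PB Q → PB Q → PB Q

namespace PB
variable {Q R : Type}

/-- Satisfaction of a positive boolean formula by a truth assignment. -/
def sat : PB Q → (Q → Prop) → Prop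
  | atom q, v => v q
  | and b b', v => b.sat v ∧ b'.sat v
  | or b b', v => b.sat v ∨ b'.sat v

/-- Two positive boolean formulas are equivalent if they are satisfied by exactly
the same truth assignments. -/
def Equiv (b b' : PB Q) : Prop := ∀ v : Q → Prop, b.sat v ↔ b'.sat v

/-- Dualization: swap conjunctions and disjunctions. -/
def dual : PB Q → PB Q
  | atom q => atom q
  | and b b' => or b.dual b'.dual
  | or b b' => and b.dual b'.dual

/-- The formula is a conjunction of atoms. -/
def IsConj : PB Q → Prop
  | atom _ => True
  | and b b' => b.IsConj ∧ b'.IsConj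
  | or _ _ => False

/-- The formula is a disjunction of atoms. -/
def IsDisj : PB Q → Prop
  | atom _ => True
  | and _ _ => False
  | or b b' => b.IsDisj ∧ b'.IsDisj

/-- The formula is a single atom. -/
def IsAtom : PB Q → Prop
  | atom _ => True
  | _ => False

/-- The formula is in disjunctive normal form: a disjunction of conjunctions of atoms. -/
def IsDNF : PB Q → Prop
  | atom _ => True
  | and b b' => b.IsConj ∧ b'.IsConj
  | or b b' => b.IsDNF ∧ b'.IsDNF

/-- The set of atoms occurring in a formula. -/
def atomsOf : PB Q → Set Q
  | atom q => {q}
  | and b b' => b.atomsOf ∪ b'.atomsOf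
  | or b b' => b.atomsOf ∪ b'.atomsOf

/-- `some q` if the formula is the atom `q`, else `none`. -/
def theAtom? : PB Q → Option Q
  | atom q => some q
  | _ => none

/-- Substitution of formulas for atoms. -/
def bind : PB Q → (Q → PB R) → PB R
  | atom q, f => f q
  | and b b', f => and (b.bind f) (b'.bind f)
  | or b b', f => or (b.bind f) (b'.bind f)

/-- The list of subformulas of a formula. -/
def subs : PB Q → List (PB Q)
  | atom q => [atom q]
  | and b b' => and b b' :: (b.subs ++ b'.subs)
  | or b b' => or b b' :: (b.subs ++ b'.subs)

end PB

/-- A deterministic parity automaton over the alphabet `Γ`. -/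
structure DPA (Γ : Type) : Type 1 where
  P : Type
  [finP : Finite P]
  [neP : Nonempty P]
  p0 : P
  eta : P → Γ → P
  c : P → ℕ

attribute [instance] DPA.finP DPA.neP

/-- The run of a deterministic parity automaton on an infinite word. -/
def DPA.run {Γ : Type} (D : DPA Γ) (x : ℕ → Γ) : ℕ → D.P
  | 0 => D.p0
  | n + 1 => D.eta (D.run x n) (x n)

/-- A deterministic parity automaton accepts `x` iff the largest priority seen
infinitely often along the run is even. -/
def DPA.Accepts {Γ : Type} (D : DPA Γ) (x : ℕ → Γ) : Prop :=
  ∃ k, Even k ∧ {n | D.c (D.run x n) = k}.Infinite ∧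
    ∀ j, k < j → {n | D.c (D.run x n) = j}.Finite

/-- A set of infinite words over `Γ` is ω-regular iff it is recognized by some
deterministic parity automaton. -/
def OmegaRegular {Γ : Type} (W : Set (ℕ → Γ)) : Prop :=
  ∃ D : DPA Γ, ∀ x, x ∈ W ↔ D.Accepts x

/-- An alternating word automaton with states labeled into `Γ` and acceptance set
`W ⊆ Γ^ω`. -/
structure AltAutomaton (Sig Γ : Type) : Type 1 where
  Q : Type
  [finQ : Finite Q]
  [neQ : Nonempty Q]
  init : Q
  delta : Q → Sig → PB Q
  label : Q → Γ
  W : Set (ℕ → Γ)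

attribute [instance] AltAutomaton.finQ AltAutomaton.neQ

/-- A two-player win/lose game of infinite duration, given by a move relation,
ownership of positions (`eve p` iff `p` belongs to Eve), an initial position, and
a winning condition for Eve on plays. -/
structure Game (Pos : Type) where
  move : Pos → Pos → Prop
  eve : Pos → Prop
  init : Pos
  win : (ℕ → Pos) → Prop

namespace Game
variable {Pos : Type} (G : Game Pos)

/-- A play: an infinite sequence of successive positions starting at the initial position. -/
def IsPlay (p : ℕ → Pos) : Prop := p 0 = G.init ∧ ∀ n, G.move (p n) (p (n + 1))

/-- The history of a play up to (and including) time `n`. -/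
def histOf (p : ℕ → Pos) (n : ℕ) : List Pos := (List.range (n + 1)).map p

/-- A valid finite history: a finite sequence of successive positions from the
initial position. -/
def IsHist (l : List Pos) : Prop := l.head? = some G.init ∧ l.Chain' G.move

/-- The play `p` agrees with the strategy `σ` of Eve. -/
def AgreesE (σ : List Pos → Pos) (p : ℕ → Pos) : Prop :=
  ∀ n, G.eve (p n) → p (n + 1) = σ (histOf p n)

/-- The play `p` agrees with the strategy `σ` of Adam. -/
def AgreesA (σ : List Pos → Pos) (p : ℕ → Pos) : Prop :=
  ∀ n, ¬ G.eve (p n) → p (n + 1) = σ (histOf p n)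

/-- `σ` is a winning strategy for Eve: it proposes legal moves at all of Eve's
positions reachable along valid histories, and every play agreeing with it is won by Eve. -/
def WinsEve (σ : List Pos → Pos) : Prop :=
  (∀ (l : List Pos) (x : Pos), G.IsHist (l ++ [x]) → G.eve x → G.move x (σ (l ++ [x]))) ∧
  (∀ p, G.IsPlay p → G.AgreesE σ p → G.win p)

/-- `σ` is a winning strategy for Adam. -/
def WinsAdam (σ : List Pos → Pos) : Prop :=
  (∀ (l : List Pos) (x : Pos), G.IsHist (l ++ [x]) → ¬ G.eve x → G.move x (σ (l ++ [x]))) ∧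
  (∀ p, G.IsPlay p → G.AgreesA σ p → ¬ G.win p)

/-- Eve has a winning strategy in `G`. -/
def EveWins : Prop := ∃ σ, G.WinsEve σ

/-- Adam has a winning strategy in `G`. -/
def AdamWins : Prop := ∃ σ, G.WinsAdam σ

end Game

/-- `s` is the subsequence of values selected by `sel` along `p`,
in order and exhaustively. -/
def IsSubseqOn {X Y : Type} (sel : X → Option Y) (p : ℕ → X) (s : ℕ → Y) : Prop :=
  ∃ ix : ℕ → ℕ, StrictMono ix ∧ (∀ n, sel (p (ix n)) = some (s n)) ∧
    ∀ m, (sel (p m)).isSome → ∃ n, ix n = m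

variable {Sig Gam : Type}

/-- Moves of the model-checking game `G(w, A)`. -/
def mcMove (A : AltAutomaton Sig Gam) (w : ℕ → Sig) :
    (ℕ × PB A.Q) → (ℕ × PB A.Q) → Prop
  | (i, PB.atom q), (j, b) => j = i + 1 ∧ b = A.delta q (w i)
  | (i, PB.and b b'), (j, c) => j = i ∧ (c = b ∨ c = b')
  | (i, PB.or b b'), (j, c) => j = i ∧ (c = b ∨ c = b')

/-- The model-checking (membership) game `G(w, A)`. Disjunction positions belong to Eve;
conjunction and atom positions (the latter having a unique successor) belong to Adam.
Eve wins a play iff its state-sequence satisfies the acceptance condition. -/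
def mcGame (A : AltAutomaton Sig Gam) (w : ℕ → Sig) : Game (ℕ × PB A.Q) where
  move := mcMove A w
  eve := fun p => match p.2 with
    | PB.or _ _ => True
    | _ => False
  init := (0, PB.atom A.init)
  win := fun p => ∀ ρ : ℕ → A.Q, IsSubseqOn (fun x => x.2.theAtom?) p ρ →
    (fun n => A.label (ρ n)) ∈ A.W

/-- `A` accepts `w` iff Eve has a winning strategy in the model-checking game. -/
def AltAutomaton.Accepts (A : AltAutomaton Sig Gam) (w : ℕ → Sig) : Prop :=
  (mcGame A w).EveWins

/-- The language of `A`. -/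
def AltAutomaton.lang (A : AltAutomaton Sig Gam) : Set (ℕ → Sig) :=
  {w | A.Accepts w}

/-- A uniform strategy: a function of the word prefix read so far and the sequence of
transition conditions visited so far. -/
abbrev UStrat (Sig Q : Type) := List Sig → List (PB Q) → PB Q

/-- The prefix `w₀ … w_{i-1}` of an infinite word. -/
def wordPrefix (w : ℕ → Sig) (i : ℕ) : List Sig := (List.range i).map w

/-- The strategy in the model-checking game `G(w, A)` induced by following the uniform
strategy `τ` (at atom positions it takes the unique move). -/
def follow (A : AltAutomaton Sig Gam) (w : ℕ → Sig) (τ : UStrat Sig A.Q)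
    (hs : List (ℕ × PB A.Q)) : ℕ × PB A.Q :=
  match hs.getLast?.getD (0, PB.atom A.init) with
  | (i, PB.atom q) => (i + 1, A.delta q (w i))
  | (i, PB.and _ _) => (i, τ (wordPrefix w i) (hs.map Prod.snd))
  | (i, PB.or _ _) => (i, τ (wordPrefix w i) (hs.map Prod.snd))

/-- The nondeterminism in `A` is history-deterministic. -/
def NondetHD (A : AltAutomaton Sig Gam) : Prop :=
  ∃ τ : UStrat Sig A.Q, ∀ w ∈ A.lang, (mcGame A w).WinsEve (follow A w τ)

/-- The universality in `A` is history-deterministic. -/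
def UnivHD (A : AltAutomaton Sig Gam) : Prop :=
  ∃ τ : UStrat Sig A.Q, ∀ w ∉ A.lang, (mcGame A w).WinsAdam (follow A w τ)

/-- `A` is history-deterministic. -/
def HistoryDet (A : AltAutomaton Sig Gam) : Prop := NondetHD A ∧ UnivHD A

/-- Moves of the letter games: at an atom a letter is picked and the transition condition
is unfolded, at conjunctions and disjunctions a subformula is picked (with empty letter). -/
def letterMove (A : AltAutomaton Sig Gam) :
    (Option Sig × PB A.Q) → (Option Sig × PB A.Q) → Prop
  | (_, PB.atom q), (σ, b) => ∃ a : Sig, σ = some a ∧ b = A.delta q a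
  | (_, PB.and b b'), (σ, c) => σ = none ∧ (c = b ∨ c = b')
  | (_, PB.or b b'), (σ, c) => σ = none ∧ (c = b ∨ c = b')

/-- Eve's letter game: Adam picks the letters and resolves conjunctions, Eve resolves
disjunctions. Eve wins a play iff the word played is not in `L(A)` or the state-sequence
satisfies the acceptance condition. -/
def eveLetterGame (A : AltAutomaton Sig Gam) : Game (Option Sig × PB A.Q) where
  move := letterMove A
  eve := fun p => match p.2 with
    | PB.or _ _ => True
    | _ => False
  init := (none, PB.atom A.init)
  win := fun p => ∀ (w : ℕ → Sig) (ρ : ℕ → A.Q),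
    IsSubseqOn (fun x => x.1) p w → IsSubseqOn (fun x => x.2.theAtom?) p ρ →
    (w ∉ A.lang ∨ (fun n => A.label (ρ n)) ∈ A.W)

/-- Adam's letter game: Eve picks the letters and resolves disjunctions, Adam resolves
conjunctions. Adam wins a play iff the word played is in `L(A)` or the state-sequence does
not satisfy the acceptance condition (stated below as Eve's winning condition, negated). -/
def adamLetterGame (A : AltAutomaton Sig Gam) : Game (Option Sig × PB A.Q) where
  move := letterMove A
  eve := fun p => match p.2 with
    | PB.and _ _ => False
    | _ => True
  init := (none, PB.atom A.init)
  win := fun p => ∀ (w : ℕ → Sig) (ρ : ℕ → A.Q),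
    IsSubseqOn (fun x => x.1) p w → IsSubseqOn (fun x => x.2.theAtom?) p ρ →
    (w ∉ A.lang ∧ (fun n => A.label (ρ n)) ∈ A.W)

/-- The strategy in a letter game induced by following the uniform strategy `τ`. -/
def letterFollow (A : AltAutomaton Sig Gam) (τ : UStrat Sig A.Q)
    (hs : List (Option Sig × PB A.Q)) : Option Sig × PB A.Q :=
  (none, τ (hs.filterMap Prod.fst) (hs.map Prod.snd))

/-- The nondeterminism in `A` is compliant with the letter games. -/
def NondetCompliant (A : AltAutomaton Sig Gam) : Prop := (eveLetterGame A).EveWins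

/-- The universality in `A` is compliant with the letter games. -/
def UnivCompliant (A : AltAutomaton Sig Gam) : Prop := (adamLetterGame A).AdamWins

/-- `A` is compliant with the letter games. -/
def LetterCompliant (A : AltAutomaton Sig Gam) : Prop := NondetCompliant A ∧ UnivCompliant A

/-- A `Sig`-arena. -/
structure Arena (Sig : Type) : Type 1 where
  V : Type
  X : V → V → Prop
  VE : V → Prop
  C : V → Sig
  v0 : V
  total : ∀ v, ∃ v', X v v'

/-- The game on the arena `R` with winning condition `L`. -/
def arenaGame (R : Arena Sig) (L : Set (ℕ → Sig)) : Game R.V where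
  move := R.X
  eve := R.VE
  init := R.v0
  win := fun p => (fun n => R.C (p n)) ∈ L

/-- Moves of the synchronized product `R × A`. -/
def prodMove (R : Arena Sig) (A : AltAutomaton Sig Gam) :
    (R.V × PB A.Q) → (R.V × PB A.Q) → Prop
  | (v, PB.atom q), (v', b) => R.X v v' ∧ b = A.delta q (R.C v')
  | (v, PB.and b b'), (v', c) => v' = v ∧ (c = b ∨ c = b')
  | (v, PB.or b b'), (v', c) => v' = v ∧ (c = b ∨ c = b')

/-- The synchronized product game `R × A`. -/
def prodGame (R : Arena Sig) (A : AltAutomaton Sig Gam) : Game (R.V × PB A.Q) where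
  move := prodMove R A
  eve := fun p => match p.2 with
    | PB.atom _ => R.VE p.1
    | PB.or _ _ => True
    | PB.and _ _ => False
  init := (R.v0, A.delta A.init (R.C R.v0))
  win := fun p => ∀ ρ : ℕ → A.Q, IsSubseqOn (fun x => x.2.theAtom?) p ρ →
    (fun n => A.label (ρ n)) ∈ A.W

/-- `A` is good for game composition. -/
def GoodForGames (A : AltAutomaton Sig Gam) : Prop :=
  ∀ R : Arena Sig, ((arenaGame R A.lang).EveWins ↔ (prodGame R A).EveWins)

/-- The composition `B × A` of an automaton `B` with `Sig`-labeled states with the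
automaton `A` over `Sig`. -/
def compose {Sig' : Type} (B : AltAutomaton Sig' Sig) (A : AltAutomaton Sig Gam) :
    AltAutomaton Sig' Gam where
  Q := B.Q × A.Q
  init := (B.init, A.init)
  delta := fun p a => (B.delta p.1 a).bind fun qB' =>
    (A.delta p.2 (B.label qB')).bind fun qA' => PB.atom (qB', qA')
  label := fun p => A.label p.2
  W := A.W

/-- `A` is good for automata composition: composing with any alternating automaton `B`
whose acceptance condition is `L(A)` preserves the language. -/
def GoodForAutomata (A : AltAutomaton Sig Gam) : Prop :=
  ∀ (Sig' : Type) (B : AltAutomaton Sig' Sig), B.W = A.lang →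
    (compose B A).lang = B.lang

/-- The underlying graph of the arena is a tree rooted at the initial node: every node is
reached from the root by a unique path. -/
def Arena.IsTree (R : Arena Sig) : Prop :=
  ∀ v : R.V, ∃! l : List R.V,
    l.head? = some R.v0 ∧ l.getLast? = some v ∧ l.Chain' R.X

/-- The arena with ownership of positions reassigned. -/
def Arena.reassign (R : Arena Sig) (E : R.V → Prop) : Arena Sig :=
  { R with VE := E }

/-- A branch of (the tree underlying) an arena. -/
def Arena.Branch (R : Arena Sig) (p : ℕ → R.V) : Prop :=
  p 0 = R.v0 ∧ ∀ n, R.X (p n) (p (n + 1))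

/-- `R` is a one-player arena. -/
def Arena.OnePlayer (R : Arena Sig) : Prop := (∀ v, R.VE v) ∨ (∀ v, ¬ R.VE v)

/-- `A` is good for trees: its universal expansion accepts exactly the trees all of whose
branches are in `L(A)`, and its existential expansion accepts exactly the trees having a
branch in `L(A)`. -/
def GoodForTrees (A : AltAutomaton Sig Gam) : Prop :=
  ∀ R : Arena Sig, R.IsTree →
    (((prodGame (R.reassign fun _ => False) A).EveWins ↔
        ∀ p : ℕ → R.V, R.Branch p → (fun n => R.C (p n)) ∈ A.lang) ∧
     ((prodGame (R.reassign fun _ => True) A).EveWins ↔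
        ∃ p : ℕ → R.V, R.Branch p ∧ (fun n => R.C (p n)) ∈ A.lang))

/-- `A` is nondeterministic: all transition conditions are disjunctions of atoms. -/
def AltAutomaton.IsNondet (A : AltAutomaton Sig Gam) : Prop :=
  ∀ q a, (A.delta q a).IsDisj

/-- `A` is universal: all transition conditions are conjunctions of atoms. -/
def AltAutomaton.IsUniv (A : AltAutomaton Sig Gam) : Prop :=
  ∀ q a, (A.delta q a).IsConj

/-- `A` is deterministic: all transition conditions are atoms. -/
def AltAutomaton.IsDet (A : AltAutomaton Sig Gam) : Prop :=
  ∀ q a, (A.delta q a).IsAtom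

/-- The Büchi acceptance set over `Bool`-labelings: `true` occurs infinitely often. -/
def BuchiW : Set (ℕ → Bool) := {x | {n | x n = true}.Infinite}

/-- The co-Büchi acceptance set over `Bool`-labelings: `false` occurs finitely often. -/
def CoBuchiW : Set (ℕ → Bool) := {x | {n | x n = false}.Finite}

/-- The edge relation of the graph induced by the transition function. -/
def edgeRel (A : AltAutomaton Sig Gam) (q q' : A.Q) : Prop :=
  ∃ a, q' ∈ (A.delta q a).atomsOf

/-- A Büchi automaton (with `Bool` labels) is weak if in every strongly connected component
all states have the same label. -/
def IsWeak (A : AltAutomaton Sig Bool) : Prop :=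
  ∀ q q', Relation.ReflTransGen (edgeRel A) q q' → Relation.ReflTransGen (edgeRel A) q' q →
    A.label q = A.label q'

end GFG

/-!
Eve (symmetrically Adam) plays in `G(w, A')` by simulating her strategy for `A` round by round.
At the start of a round the simulated history of `G(w, A)` has visited the same states as the
actual play. The set `S` of states at which the simulated round can end, when she follows her
strategy and the opponent moves freely, satisfies the transition condition of `A` (for Adam:
setting the states outside `S` to false falsifies it), hence the equivalent condition of `A'`, and
in `A'` she keeps moving to subformulas for which this still holds. The next state is therefore
in `S`, and the simulated round can be steered there. The simulated play follows her strategy in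
`G(w, A)` and visits the same states, so both plays have the same winner. The simulation only reads
the word prefix and the formula history, so it is again a uniform strategy; for a single word it
shows `L(A) = L(A')`.
-/

namespace GFG

open Classical

inductive Player
  | eve
  | adam

-- Atoms count as Adam's, as in `mcGame`.
def Player.Owns {Q : Type} : Player → PB Q → Prop
  | .eve, .or _ _ => True
  | .eve, _ => False
  | .adam, .or _ _ => False
  | .adam, _ => True

namespace PB
variable {Q : Type}

def IsNode (b c₁ c₂ : PB Q) : Prop := b = and c₁ c₂ ∨ b = or c₁ c₂

@[elab_as_elim]
theorem induction_node {motive : PB Q → Prop} (atom : ∀ q, motive (atom q))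
    (node : ∀ b c₁ c₂, b.IsNode c₁ c₂ → (∀ c, c = c₁ ∨ c = c₂ → motive c) → motive b) :
    ∀ b, motive b
  | .atom q => atom q
  | .and c₁ c₂ => node _ c₁ c₂ (Or.inl rfl) fun _ hc =>
    hc.elim (· ▸ induction_node atom node c₁) (· ▸ induction_node atom node c₂)
  | .or c₁ c₂ => node _ c₁ c₂ (Or.inr rfl) fun _ hc =>
    hc.elim (· ▸ induction_node atom node c₁) (· ▸ induction_node atom node c₂)

theorem atom_or_node (b : PB Q) : (∃ q, b = atom q) ∨ ∃ c₁ c₂, b.IsNode c₁ c₂ := by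
  cases b <;> simp [IsNode]

theorem isAtom_iff {b : PB Q} : b.IsAtom ↔ ∃ q, b = atom q := by
  cases b <;> simp [IsAtom]

theorem isSome_theAtom? {b : PB Q} : b.theAtom?.isSome ↔ b.IsAtom := by
  cases b <;> simp [theAtom?, IsAtom]

theorem sat_mono {v v' : Q → Prop} (h : ∀ q, v q → v' q) {b : PB Q} (hb : b.sat v) :
    b.sat v' := by
  induction b with
  | atom q => exact h q hb
  | and _ _ ih₁ ih₂ => exact ⟨ih₁ hb.1, ih₂ hb.2⟩
  | or _ _ ih₁ ih₂ => exact hb.imp ih₁ ih₂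

/-- From `b`, player `P` can force the current round to end in `S`. -/
def Holds : Player → PB Q → Set Q → Prop
  | .eve, b, S => b.sat (· ∈ S)
  | .adam, b, S => ¬ b.sat (· ∉ S)

variable {P : Player} {b c₁ c₂ : PB Q} {S : Set Q}

theorem holds_atom {q : Q} : Holds P (atom q) S ↔ q ∈ S := by
  cases P <;> simp [Holds, sat]

theorem holds_of_owns (hb : b.IsNode c₁ c₂) (h : P.Owns b) :
    Holds P b S ↔ Holds P c₁ S ∨ Holds P c₂ S := by
  cases P <;> rcases hb with rfl | rfl <;> simp_all [Holds, sat, Player.Owns, imp_iff_not_or]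

theorem holds_of_not_owns (hb : b.IsNode c₁ c₂) (h : ¬ P.Owns b) :
    Holds P b S ↔ Holds P c₁ S ∧ Holds P c₂ S := by
  cases P <;> rcases hb with rfl | rfl <;> simp_all [Holds, sat, Player.Owns, not_or]

theorem Equiv.symm {b' : PB Q} (h : b.Equiv b') : b'.Equiv b := fun v => (h v).symm

theorem Holds.mono {S' : Set Q} (h : Holds P b S) (hS : S ⊆ S') : Holds P b S' := by
  cases P
  · exact sat_mono (fun q hq => hS hq) h
  · exact fun h' => h (sat_mono (fun q hq hqS => hq (hS hqS)) h')

theorem Equiv.holds_iff {b' : PB Q} (h : b.Equiv b') : Holds P b S ↔ Holds P b' S := by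
  cases P
  · exact h _
  · exact not_congr (h _)

end PB

namespace Game
variable {Pos : Type} (G : Game Pos)

def Turn : Player → Pos → Prop
  | .eve, x => G.eve x
  | .adam, x => ¬ G.eve x

def Agrees (P : Player) (σ : List Pos → Pos) (p : ℕ → Pos) : Prop :=
  ∀ n, G.Turn P (p n) → p (n + 1) = σ (histOf p n)

def Wins (P : Player) (σ : List Pos → Pos) : Prop :=
  (∀ l x, G.IsHist (l ++ [x]) → G.Turn P x → G.move x (σ (l ++ [x]))) ∧
  ∀ p, G.IsPlay p → G.Agrees P σ p → (G.win p ↔ P = .eve)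

variable {G}

theorem wins_eve_iff {σ : List Pos → Pos} : G.Wins .eve σ ↔ G.WinsEve σ := by
  simp [Wins, WinsEve, Agrees, AgreesE, Turn]

theorem wins_adam_iff {σ : List Pos → Pos} : G.Wins .adam σ ↔ G.WinsAdam σ := by
  simp [Wins, WinsAdam, Agrees, AgreesA, Turn]

theorem histOf_succ (p : ℕ → Pos) (n : ℕ) : histOf p (n + 1) = histOf p n ++ [p (n + 1)] := by
  simp [histOf, List.range_succ]

theorem histOf_getLast? (p : ℕ → Pos) (n : ℕ) : (histOf p n).getLast? = some (p n) := by
  simp [histOf, List.range_succ]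

theorem IsPlay.isHist {p : ℕ → Pos} (hp : G.IsPlay p) (n : ℕ) : G.IsHist (histOf p n) := by
  induction n with
  | zero => exact ⟨by simp [histOf, hp.1], List.isChain_singleton _⟩
  | succ n ih =>
    refine ⟨by simp [histOf, List.range_succ_eq_map, hp.1], ?_⟩
    change List.IsChain _ _
    rw [histOf_succ, List.isChain_append]
    refine ⟨ih.2, List.isChain_singleton _, ?_⟩
    simp only [histOf_getLast?, Option.mem_def, Option.some.injEq, List.head?_cons]
    rintro _ rfl _ rfl
    exact hp.2 n

theorem Wins.move {P : Player} {σ : List Pos → Pos} (h : G.Wins P σ) {m : List Pos} {x : Pos}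
    (hm : G.IsHist m) (hx : m.getLast? = some x) (ht : G.Turn P x) : G.move x (σ m) := by
  obtain ⟨l, rfl⟩ : ∃ l, m = l ++ [x] :=
    ⟨m.dropLast, (List.dropLast_append_getLast? x hx).symm⟩
  exact h.1 l x hm ht

variable (G)

inductive Consistent (P : Player) (σ : List Pos → Pos) : List Pos → Prop
  | init : Consistent P σ [G.init]
  | snoc {m : List Pos} {x y : Pos} : Consistent P σ m → m.getLast? = some x → G.move x y →
      (G.Turn P x → y = σ m) → Consistent P σ (m ++ [y])

variable {G}

namespace Consistent
variable {P : Player} {σ : List Pos → Pos} {m : List Pos}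

theorem ne_nil (h : G.Consistent P σ m) : m ≠ [] := by
  cases h <;> simp

theorem isHist (h : G.Consistent P σ m) : G.IsHist m := by
  induction h with
  | init => exact ⟨rfl, List.isChain_singleton _⟩
  | @snoc m x y hm hx hxy _ ih =>
    obtain ⟨a, t, rfl⟩ := List.exists_cons_of_ne_nil hm.ne_nil
    refine ⟨by simpa using ih.1, ?_⟩
    refine List.isChain_append.2 ⟨ih.2, List.isChain_singleton _, ?_⟩
    simp only [hx, Option.mem_def, Option.some.injEq, List.head?_cons]
    rintro _ rfl _ rfl
    exact hxy

theorem of_prefix (h : G.Consistent P σ m) {m' : List Pos} (hm' : m' <+: m) (hne : m' ≠ []) :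
    G.Consistent P σ m' := by
  induction h generalizing m' with
  | init =>
    obtain ⟨t, ht⟩ := hm'
    rcases m' with _ | ⟨a, _ | ⟨b, s⟩⟩ <;> simp_all [init]
  | snoc hm hx hxy hσ ih =>
    rcases List.prefix_concat_iff.1 hm' with rfl | hm'
    · exact snoc hm hx hxy hσ
    · exact ih hm' hne

theorem snoc_inv {y : Pos} (h : G.Consistent P σ (m ++ [y])) (hm : m ≠ []) :
    G.Consistent P σ m ∧ ∃ x, m.getLast? = some x ∧ G.move x y ∧ (G.Turn P x → y = σ m) := by
  generalize hl : m ++ [y] = l at h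
  cases h with
  | init =>
    rcases m with _ | ⟨a, t⟩
    · exact absurd rfl hm
    · simp at hl
  | @snoc m' x' y' hm' hx hxy hσ =>
    obtain ⟨rfl, hy⟩ := List.append_inj' hl rfl
    obtain rfl : y = y' := by simpa using hy
    exact ⟨hm', x', hx, hxy, hσ⟩

end Consistent

theorem isPlay_agrees_of_consistent {P : Player} {σ : List Pos → Pos} {p : ℕ → Pos}
    (h : ∀ n, G.Consistent P σ (histOf p n)) : G.IsPlay p ∧ G.Agrees P σ p := by
  have step (n : ℕ) := (by simpa [histOf_succ] using h (n + 1) :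
    G.Consistent P σ (histOf p n ++ [p (n + 1)])).snoc_inv (by simp [histOf])
  refine ⟨⟨?_, fun n => ?_⟩, fun n ht => ?_⟩
  · simpa [histOf] using (h 0).isHist.1
  · obtain ⟨x, hx, hxy, -⟩ := (step n).2
    rw [histOf_getLast?, Option.some.injEq] at hx
    exact hx ▸ hxy
  · obtain ⟨x, hx, -, hσ⟩ := (step n).2
    rw [histOf_getLast?, Option.some.injEq] at hx
    exact hσ (hx ▸ ht)

end Game

theorem exists_histOf_prefix {α : Type} (L : ℕ → List α) (hmono : ∀ k, L k <+: L (k + 1))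
    (hlen : ∀ k, k < (L k).length) : ∃ f : ℕ → α, ∀ n, Game.histOf f n <+: L n := by
  have hmono' {k k' : ℕ} (hk : k ≤ k') : L k <+: L k' := by
    induction k', hk using Nat.le_induction with
    | base => exact List.prefix_rfl
    | succ k' _ ih => exact ih.trans (hmono k')
  refine ⟨fun n => (L n)[n]'(hlen n), fun n => ?_⟩
  rw [List.prefix_iff_eq_take]
  apply List.ext_getElem (by simp [Game.histOf, Nat.succ_le_of_lt (hlen n)])
  intro j hj _
  simp only [Game.histOf, List.getElem_map, List.getElem_range, List.getElem_take]
  simp only [Game.histOf, List.length_map, List.length_range] at hj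
  exact (hmono' (Nat.le_of_lt_succ hj)).getElem (hlen j)

variable {Sig Gam : Type}

section ModelChecking
variable {A : AltAutomaton Sig Gam} {w : ℕ → Sig}

theorem mcGame_turn {P : Player} {x : ℕ × PB A.Q} : (mcGame A w).Turn P x ↔ P.Owns x.2 := by
  rcases x with ⟨i, b⟩
  cases P <;> cases b <;> simp [Game.Turn, mcGame, Player.Owns]

theorem mcMove_atom_iff {i : ℕ} {q : A.Q} {y : ℕ × PB A.Q} :
    mcMove A w (i, .atom q) y ↔ y = (i + 1, A.delta q (w i)) := by
  rcases y with ⟨j, c⟩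
  simp [mcMove]

theorem mcMove_node_iff {i : ℕ} {b c₁ c₂ : PB A.Q} (hb : b.IsNode c₁ c₂) {y : ℕ × PB A.Q} :
    mcMove A w (i, b) y ↔ y = (i, c₁) ∨ y = (i, c₂) := by
  rcases y with ⟨j, c⟩
  rcases hb with rfl | rfl <;> simp [mcMove, and_or_left]

theorem follow_atom {τ : UStrat Sig A.Q} {l : List (ℕ × PB A.Q)} {i : ℕ} {q : A.Q}
    (hl : l.getLast? = some (i, .atom q)) : follow A w τ l = (i + 1, A.delta q (w i)) := by
  simp [follow, hl]

theorem follow_node {τ : UStrat Sig A.Q} {l : List (ℕ × PB A.Q)} {i : ℕ} {b c₁ c₂ : PB A.Q}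
    (hl : l.getLast? = some (i, b)) (hb : b.IsNode c₁ c₂) :
    follow A w τ l = (i, τ (wordPrefix w i) (l.map Prod.snd)) := by
  rcases hb with rfl | rfl <;> simp [follow, hl]

namespace Game.IsPlay
variable {p : ℕ → ℕ × PB A.Q} (hp : (mcGame A w).IsPlay p)
include hp

theorem mcMove_succ (n : ℕ) : mcMove A w (p n) (p (n + 1)) := hp.2 n

theorem fst_eq_count (n : ℕ) : (p n).1 = Nat.count (fun k => (p k).2.IsAtom) n := by
  induction n with
  | zero => simp [hp.1, mcGame]
  | succ n ih =>
    have hmove := hp.mcMove_succ n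
    rw [Nat.count_succ, ← ih]
    rcases hpn : p n with ⟨i, b⟩
    rw [hpn] at hmove
    cases b with
    | atom q => simp [(mcMove_atom_iff.1 hmove), PB.IsAtom]
    | and c₁ c₂ =>
      rcases (mcMove_node_iff (Or.inl rfl)).1 hmove with h | h <;> simp [h, PB.IsAtom]
    | or c₁ c₂ =>
      rcases (mcMove_node_iff (Or.inr rfl)).1 hmove with h | h <;> simp [h, PB.IsAtom]

theorem exists_atom_ge (N : ℕ) : ∃ n, N ≤ n ∧ (p n).2.IsAtom := by
  suffices ∀ b N, (p N).2 = b → ∃ n, N ≤ n ∧ (p n).2.IsAtom from this _ N rfl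
  intro b
  induction b using PB.induction_node with
  | atom q => exact fun N hN => ⟨N, le_rfl, by simp [hN, PB.IsAtom]⟩
  | node b c₁ c₂ hb ih =>
    intro N hN
    have hmove := hp.mcMove_succ N
    rw [← Prod.mk.eta (p := p N), hN, mcMove_node_iff hb] at hmove
    obtain ⟨n, hn, ha⟩ := ih (p (N + 1)).2 (by rcases hmove with h | h <;> simp [h]) (N + 1) rfl
    exact ⟨n, by omega, ha⟩

theorem atoms_infinite : {n | (p n).2.IsAtom}.Infinite :=
  Set.infinite_of_forall_exists_gt fun N =>
    (hp.exists_atom_ge (N + 1)).imp fun _ hn => ⟨hn.2, hn.1⟩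


theorem exists_atom_nth (k : ℕ) :
    ∃ q, p (Nat.nth (fun n => (p n).2.IsAtom) k) = (k, .atom q) := by
  have hinf := hp.atoms_infinite
  obtain ⟨q, hq⟩ := PB.isAtom_iff.1 (Nat.nth_mem_of_infinite hinf k)
  exact ⟨q, Prod.ext (by rw [hp.fst_eq_count, Nat.count_nth_of_infinite hinf]) hq⟩

theorem nth_eq_of_eq_atom {n i : ℕ} {q : A.Q} (hn : p n = (i, .atom q)) :
    Nat.nth (fun k => (p k).2.IsAtom) i = n := by
  have hi : i = (p n).1 := by simp [hn]
  rw [hi, hp.fst_eq_count]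
  exact Nat.nth_count (by simp [hn, PB.IsAtom])

theorem isSubseqOn_iff {ρ : ℕ → A.Q} :
    IsSubseqOn (fun x => x.2.theAtom?) p ρ ↔ ∀ n i q, p n = (i, .atom q) → ρ i = q := by
  have hinf := hp.atoms_infinite
  constructor
  · rintro ⟨ix, hmono, hsel, hexh⟩ n i q hn
    have hix : ix = Nat.nth fun n => (p n).2.IsAtom := by
      refine (hmono.range_inj (Nat.nth_strictMono hinf)).1 ?_
      rw [Nat.range_nth_of_infinite hinf]
      ext m
      constructor
      · rintro ⟨k, rfl⟩
        exact PB.isSome_theAtom?.1 (by simp [hsel k])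
      · exact fun hm => hexh m (PB.isSome_theAtom?.2 hm)
    have hsel' := hsel i
    rw [hix, hp.nth_eq_of_eq_atom hn, hn] at hsel'
    simpa [PB.theAtom?] using hsel'.symm
  · refine fun h => ⟨_, Nat.nth_strictMono hinf, fun k => ?_, fun m hm => ⟨_, Nat.nth_count
      (PB.isSome_theAtom?.1 hm)⟩⟩
    obtain ⟨q, hq⟩ := hp.exists_atom_nth k
    simp [hq, PB.theAtom?, h _ _ _ hq]

theorem exists_isSubseqOn : ∃ ρ : ℕ → A.Q, IsSubseqOn (fun x => x.2.theAtom?) p ρ := by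
  refine ⟨fun k => ((p (Nat.nth (fun n => (p n).2.IsAtom) k)).2.theAtom?).getD A.init,
    hp.isSubseqOn_iff.2 fun n i q hn => ?_⟩
  simp only [hp.nth_eq_of_eq_atom hn, hn]
  rfl

theorem win_iff {ρ : ℕ → A.Q} (hρ : IsSubseqOn (fun x => x.2.theAtom?) p ρ) :
    (mcGame A w).win p ↔ (fun n => A.label (ρ n)) ∈ A.W := by
  refine ⟨fun h => h ρ hρ, fun h ρ' hρ' => ?_⟩
  obtain rfl : ρ' = ρ := funext fun k => by
    obtain ⟨q, hq⟩ := hp.exists_atom_nth k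
    rw [hp.isSubseqOn_iff.1 hρ' _ _ _ hq, hp.isSubseqOn_iff.1 hρ _ _ _ hq]
  exact h

theorem filterMap_histOf {ρ : ℕ → A.Q} (hρ : ∀ n i q, p n = (i, .atom q) → ρ i = q) (n : ℕ) :
    ((Game.histOf p n).map Prod.snd).filterMap PB.theAtom? =
      (List.range (Nat.count (fun k => (p k).2.IsAtom) (n + 1))).map ρ := by
  induction n with
  | zero =>
    have h0 : p 0 = (0, .atom A.init) := hp.1
    simp [Game.histOf, h0, Nat.count_succ, PB.IsAtom, PB.theAtom?, hρ 0 0 A.init h0]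
  | succ n ih =>
    have hidx := hp.fst_eq_count (n + 1)
    rw [Game.histOf_succ, List.map_append, List.filterMap_append, ih,
      Nat.count_succ _ (n + 1), List.range_add, List.map_append]
    rcases hpn : p (n + 1) with ⟨i, b⟩
    rw [hpn] at hidx
    cases b with
    | atom q =>
      have hq : ρ (Nat.count (fun k => (p k).2.IsAtom) (n + 1)) = q := hidx ▸ hρ _ _ _ hpn
      rw [if_pos (by simp [PB.IsAtom])]
      simp [PB.theAtom?, hq]
    | and | or =>
      rw [if_neg (by simp [PB.IsAtom])]
      simp [PB.theAtom?]

end Game.IsPlay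

end ModelChecking

section Round
variable {Q : Type} (P : Player) (τ : UStrat Sig Q) (u : List Sig) (i : ℕ)

/-- The states at which the current round can end when it continues from `b`, reached along the
history `m`, with `P` following `τ` and the opponent moving freely. -/
noncomputable def reach : List (ℕ × PB Q) → PB Q → Set Q
  | _, .atom q => {q}
  | m, .and c₁ c₂ =>
    if P.Owns (.and c₁ c₂) then
      if τ u (m.map Prod.snd) = c₁ then reach (m ++ [(i, c₁)]) c₁ else reach (m ++ [(i, c₂)]) c₂
    else reach (m ++ [(i, c₁)]) c₁ ∪ reach (m ++ [(i, c₂)]) c₂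
  | m, .or c₁ c₂ =>
    if P.Owns (.or c₁ c₂) then
      if τ u (m.map Prod.snd) = c₁ then reach (m ++ [(i, c₁)]) c₁ else reach (m ++ [(i, c₂)]) c₂
    else reach (m ++ [(i, c₁)]) c₁ ∪ reach (m ++ [(i, c₂)]) c₂

noncomputable def GoesLeft (t : Q) (m : List (ℕ × PB Q)) (b c₁ : PB Q) : Prop :=
  if P.Owns b then τ u (m.map Prod.snd) = c₁ else t ∈ reach P τ u i (m ++ [(i, c₁)]) c₁

noncomputable def steer (t : Q) (m : List (ℕ × PB Q)) (b c₁ c₂ : PB Q) : PB Q :=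
  if GoesLeft P τ u i t m b c₁ then c₁ else c₂

/-- The rest of the round from `b` (reached along `m`), steered towards `t`. -/
noncomputable def descent (t : Q) : List (ℕ × PB Q) → PB Q → List (ℕ × PB Q)
  | _, .atom _ => []
  | m, .and c₁ c₂ =>
    if GoesLeft P τ u i t m (.and c₁ c₂) c₁
    then (i, c₁) :: descent t (m ++ [(i, c₁)]) c₁ else (i, c₂) :: descent t (m ++ [(i, c₂)]) c₂
  | m, .or c₁ c₂ =>
    if GoesLeft P τ u i t m (.or c₁ c₂) c₁
    then (i, c₁) :: descent t (m ++ [(i, c₁)]) c₁ else (i, c₂) :: descent t (m ++ [(i, c₂)]) c₂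

variable {P τ u i} {t : Q} {m : List (ℕ × PB Q)} {b c₁ c₂ : PB Q}

theorem reach_node (hb : b.IsNode c₁ c₂) :
    reach P τ u i m b = if P.Owns b then
      (if τ u (m.map Prod.snd) = c₁ then reach P τ u i (m ++ [(i, c₁)]) c₁
        else reach P τ u i (m ++ [(i, c₂)]) c₂)
      else reach P τ u i (m ++ [(i, c₁)]) c₁ ∪ reach P τ u i (m ++ [(i, c₂)]) c₂ := by
  rcases hb with rfl | rfl <;> rfl

theorem holds_reach (b : PB Q) : ∀ m, b.Holds P (reach P τ u i m b) := by
  induction b using PB.induction_node with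
  | atom q => exact fun _ => PB.holds_atom.2 rfl
  | node b c₁ c₂ hb ih =>
    intro m
    have ih₁ := ih c₁ (Or.inl rfl) (m ++ [(i, c₁)])
    have ih₂ := ih c₂ (Or.inr rfl) (m ++ [(i, c₂)])
    rw [reach_node hb]
    by_cases hown : P.Owns b
    · rw [PB.holds_of_owns hb hown, if_pos hown]
      split_ifs
      exacts [Or.inl ih₁, Or.inr ih₂]
    · rw [PB.holds_of_not_owns hb hown, if_neg hown]
      exact ⟨ih₁.mono Set.subset_union_left, ih₂.mono Set.subset_union_right⟩

theorem descent_node (hb : b.IsNode c₁ c₂) :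
    descent P τ u i t m b =
      (i, steer P τ u i t m b c₁ c₂) ::
        descent P τ u i t (m ++ [(i, steer P τ u i t m b c₁ c₂)]) (steer P τ u i t m b c₁ c₂) := by
  rcases hb with rfl | rfl
  · by_cases h : GoesLeft P τ u i t m (.and c₁ c₂) c₁ <;> simp [descent, steer, h]
  · by_cases h : GoesLeft P τ u i t m (.or c₁ c₂) c₁ <;> simp [descent, steer, h]

theorem steer_eq_or : steer P τ u i t m b c₁ c₂ = c₁ ∨ steer P τ u i t m b c₁ c₂ = c₂ := by
  unfold steer
  split_ifs <;> simp

theorem steer_eq_of_owns (h : P.Owns b)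
    (hτ : τ u (m.map Prod.snd) = c₁ ∨ τ u (m.map Prod.snd) = c₂) :
    steer P τ u i t m b c₁ c₂ = τ u (m.map Prod.snd) := by
  unfold steer GoesLeft
  rw [if_pos h]
  split_ifs with h₁
  · exact h₁.symm
  · exact (hτ.resolve_left h₁).symm

theorem mem_reach_steer (hb : b.IsNode c₁ c₂) (ht : t ∈ reach P τ u i m b) :
    t ∈ reach P τ u i (m ++ [(i, steer P τ u i t m b c₁ c₂)]) (steer P τ u i t m b c₁ c₂) := by
  rw [reach_node hb] at ht
  unfold steer GoesLeft
  by_cases hown : P.Owns b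
  · rw [if_pos hown] at ht ⊢
    by_cases hτ : τ u (m.map Prod.snd) = c₁
    · rw [if_pos hτ] at ht ⊢
      exact ht
    · rw [if_neg hτ] at ht ⊢
      exact ht
  · rw [if_neg hown] at ht ⊢
    by_cases h₁ : t ∈ reach P τ u i (m ++ [(i, c₁)]) c₁
    · rw [if_pos h₁]
      exact h₁
    · rw [if_neg h₁]
      exact ht.resolve_left h₁

end Round

theorem wordPrefix_congr {x x' : ℕ → Sig} {i : ℕ} (h : ∀ j < i, x j = x' j) :
    wordPrefix x i = wordPrefix x' i :=
  List.map_congr_left fun j hj => h j (List.mem_range.1 hj)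

section Simulation
variable {A : AltAutomaton Sig Gam} {w : ℕ → Sig} {P : Player} {τ : UStrat Sig A.Q}

theorem descent_spec (hwin : (mcGame A w).Wins P (follow A w τ)) {i : ℕ} {t : A.Q} (b : PB A.Q) :
    ∀ m, (mcGame A w).Consistent P (follow A w τ) m → m.getLast? = some (i, b) →
      t ∈ reach P τ (wordPrefix w i) i m b →
      (mcGame A w).Consistent P (follow A w τ) (m ++ descent P τ (wordPrefix w i) i t m b) ∧
      ((i, b) :: descent P τ (wordPrefix w i) i t m b).getLast? = some (i, .atom t) ∧
      ∀ y ∈ (i, b) :: descent P τ (wordPrefix w i) i t m b,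
        y.1 = i ∧ ∀ q, y.2 = .atom q → q = t := by
  induction b using PB.induction_node with
  | atom q =>
    intro m hm _ ht
    obtain rfl : t = q := ht
    simp [descent, hm]
  | node b c₁ c₂ hb ih =>
    intro m hm hlast ht
    set c := steer P τ (wordPrefix w i) i t m b c₁ c₂ with hc_def
    have hc : c = c₁ ∨ c = c₂ := steer_eq_or
    have hmove : mcMove A w (i, b) (i, c) :=
      (mcMove_node_iff hb).2 (by rcases hc with h | h <;> simp [h])
    have hagree : (mcGame A w).Turn P (i, b) → (i, c) = follow A w τ m := by
      intro hturn
      have hlegal := hwin.move hm.isHist hlast hturn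
      rw [follow_node hlast hb] at hlegal ⊢
      have hτ := (mcMove_node_iff hb).1 hlegal
      simp only [Prod.mk.injEq, true_and] at hτ
      rw [hc_def, steer_eq_of_owns (mcGame_turn.1 hturn) hτ]
    obtain ⟨h₁, h₂, h₃⟩ := ih c hc (m ++ [(i, c)]) (hm.snoc hlast hmove hagree)
      List.getLast?_concat (mem_reach_steer hb ht)
    rw [descent_node hb, ← hc_def]
    refine ⟨by simpa using h₁, by simpa using h₂, ?_⟩
    rintro y (_ | ⟨_, hy⟩)
    · refine ⟨rfl, fun q hq => ?_⟩
      rcases hb with rfl | rfl <;> cases hq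
    · exact h₃ y hy

variable (A P τ) in
/-- The simulated history up to the atom of index `k`: round `j` is steered towards `ρ (j + 1)`,
reading the letters of `x`. -/
noncomputable def simHist (x : ℕ → Sig) (ρ : ℕ → A.Q) : ℕ → List (ℕ × PB A.Q)
  | 0 => [(0, .atom A.init)]
  | k + 1 =>
    simHist x ρ k ++ (k + 1, A.delta (ρ k) (x k)) ::
      descent P τ (wordPrefix x (k + 1)) (k + 1) (ρ (k + 1))
        (simHist x ρ k ++ [(k + 1, A.delta (ρ k) (x k))]) (A.delta (ρ k) (x k))

variable (A P τ) in
noncomputable def roundSet (x : ℕ → Sig) (ρ : ℕ → A.Q) (k : ℕ) : Set A.Q :=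
  reach P τ (wordPrefix x (k + 1)) (k + 1) (simHist A P τ x ρ k ++ [(k + 1, A.delta (ρ k) (x k))])
    (A.delta (ρ k) (x k))

theorem simHist_congr {x x' : ℕ → Sig} {ρ ρ' : ℕ → A.Q} {k : ℕ} (hx : ∀ j < k, x j = x' j)
    (hρ : ∀ j ≤ k, ρ j = ρ' j) : simHist A P τ x ρ k = simHist A P τ x' ρ' k := by
  induction k with
  | zero => rfl
  | succ k ih =>
    simp only [simHist]
    rw [ih (fun j hj => hx j (by omega)) (fun j hj => hρ j (by omega)), hx k (by omega),
      hρ k (by omega), hρ (k + 1) le_rfl, wordPrefix_congr hx]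

theorem roundSet_congr {x x' : ℕ → Sig} {ρ ρ' : ℕ → A.Q} {k : ℕ} (hx : ∀ j ≤ k, x j = x' j)
    (hρ : ∀ j ≤ k, ρ j = ρ' j) : roundSet A P τ x ρ k = roundSet A P τ x' ρ' k := by
  simp only [roundSet]
  rw [simHist_congr (fun j hj => hx j hj.le) hρ, hx k le_rfl, hρ k le_rfl,
    wordPrefix_congr fun j hj => hx j (by omega)]

theorem simHist_spec (hwin : (mcGame A w).Wins P (follow A w τ)) {ρ : ℕ → A.Q}
    (hρ₀ : ρ 0 = A.init) (hρ : ∀ k, ρ (k + 1) ∈ roundSet A P τ w ρ k) (k : ℕ) :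
    (mcGame A w).Consistent P (follow A w τ) (simHist A P τ w ρ k) ∧
      (simHist A P τ w ρ k).getLast? = some (k, .atom (ρ k)) ∧
      ∀ y ∈ simHist A P τ w ρ k, ∀ j q, y = (j, .atom q) → ρ j = q := by
  induction k with
  | zero =>
    refine ⟨Game.Consistent.init, by simp [simHist, hρ₀], ?_⟩
    simp [simHist, hρ₀]
  | succ k ih =>
    obtain ⟨hcons, hlast, hatoms⟩ := ih
    have hstart := hcons.snoc hlast (mcMove_atom_iff.2 rfl) fun _ => (follow_atom hlast).symm
    obtain ⟨h₁, h₂, h₃⟩ := descent_spec hwin _ _ hstart List.getLast?_concat (hρ k)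
    refine ⟨by simpa [simHist] using h₁, by simpa [simHist] using h₂, ?_⟩
    simp only [simHist, List.mem_append]
    rintro y (hy | hy) j q rfl
    · exact hatoms _ hy j q rfl
    · obtain ⟨rfl, h⟩ := h₃ _ hy
      exact (h q rfl).symm

theorem lt_length_simHist (x : ℕ → Sig) (ρ : ℕ → A.Q) (k : ℕ) :
    k < (simHist A P τ x ρ k).length := by
  induction k with
  | zero => simp [simHist]
  | succ k ih => simp only [simHist, List.length_append, List.length_cons]; omega

theorem exists_play_of_mem_roundSet (hwin : (mcGame A w).Wins P (follow A w τ)) {ρ : ℕ → A.Q}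
    (hρ₀ : ρ 0 = A.init) (hρ : ∀ k, ρ (k + 1) ∈ roundSet A P τ w ρ k) :
    ∃ p, (mcGame A w).IsPlay p ∧ (mcGame A w).Agrees P (follow A w τ) p ∧
      ∀ n j q, p n = (j, .atom q) → ρ j = q := by
  obtain ⟨p, hpre⟩ := exists_histOf_prefix (simHist A P τ w ρ) (fun k => List.prefix_append _ _)
    (lt_length_simHist w ρ)
  have hspec := simHist_spec hwin hρ₀ hρ
  obtain ⟨hp, hag⟩ := Game.isPlay_agrees_of_consistent fun n =>
    (hspec n).1.of_prefix (hpre n) (by simp [Game.histOf])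
  refine ⟨p, hp, hag, fun n j q hn => (hspec n).2.2 _ ((hpre n).subset ?_) j q hn⟩
  exact List.mem_map.2 ⟨n, List.self_mem_range_succ, rfl⟩

end Simulation

abbrev AltAutomaton.withDelta (A : AltAutomaton Sig Gam) (δ' : A.Q → Sig → PB A.Q) :
    AltAutomaton Sig Gam :=
  { A with delta := δ' }

/-- Simulates `τ` round by round, reading the states visited so far off the formula history, and
moves to a child that still holds for the set of states at which the simulated round can end. -/
noncomputable def simStrat [Nonempty Sig] (A : AltAutomaton Sig Gam) (P : Player)
    (τ : UStrat Sig A.Q) : UStrat Sig A.Q := fun u h =>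
  let S := roundSet A P τ (fun j => u.getD j (Classical.arbitrary Sig))
    (fun j => (h.filterMap PB.theAtom?).getD j A.init) (u.length - 1)
  match h.getLast? with
  | some (.and c₁ c₂) | some (.or c₁ c₂) => if c₁.Holds P S then c₁ else c₂
  | _ => .atom A.init

section Transfer
variable [Nonempty Sig] {A : AltAutomaton Sig Gam} {δ' : A.Q → Sig → PB A.Q} {w : ℕ → Sig}
  {P : Player} {τ : UStrat Sig A.Q}

theorem simStrat_node {u : List Sig} {h : List (PB A.Q)} {b c₁ c₂ : PB A.Q}
    (hl : h.getLast? = some b) (hb : b.IsNode c₁ c₂) :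
    simStrat A P τ u h = if c₁.Holds P (roundSet A P τ (fun j => u.getD j (Classical.arbitrary Sig))
      (fun j => (h.filterMap PB.theAtom?).getD j A.init) (u.length - 1)) then c₁ else c₂ := by
  rcases hb with rfl | rfl <;> simp [simStrat, hl]

theorem follow_simStrat_move (l : List (ℕ × PB A.Q)) (x : ℕ × PB A.Q) :
    mcMove (A.withDelta δ') w x (follow (A.withDelta δ') w (simStrat A P τ) (l ++ [x])) := by
  rcases x with ⟨i, b⟩
  rcases PB.atom_or_node b with ⟨q, rfl⟩ | ⟨c₁, c₂, hb⟩
  · exact mcMove_atom_iff.2 (follow_atom List.getLast?_concat)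
  · rw [follow_node (A := A.withDelta δ') List.getLast?_concat hb, simStrat_node (by simp) hb,
      mcMove_node_iff (A := A.withDelta δ') hb]
    split_ifs <;> simp

theorem follow_simStrat_node {p : ℕ → ℕ × PB A.Q} (hp : (mcGame (A.withDelta δ') w).IsPlay p)
    {ρ : ℕ → A.Q} (hρ : ∀ n i q, p n = (i, .atom q) → ρ i = q) {n j : ℕ} {b c₁ c₂ : PB A.Q}
    (hpn : p n = (j + 1, b)) (hb : b.IsNode c₁ c₂) :
    follow (A.withDelta δ') w (simStrat A P τ) (Game.histOf p n) =
      (j + 1, if c₁.Holds P (roundSet A P τ w ρ j) then c₁ else c₂) := by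
  have hlast : (Game.histOf p n).getLast? = some (j + 1, b) := by rw [Game.histOf_getLast?, hpn]
  rw [follow_node (A := A.withDelta δ') hlast hb,
    simStrat_node (by simp [List.getLast?_map, hlast]) hb]
  have hcount : Nat.count (fun k => (p k).2.IsAtom) (n + 1) = j + 1 := by
    rw [Nat.count_succ, ← hp.fst_eq_count, hpn,
      if_neg (by rcases hb with rfl | rfl <;> simp [PB.IsAtom])]
  have hS : roundSet A P τ (fun k => (wordPrefix w (j + 1)).getD k (Classical.arbitrary Sig))
      (fun k => (((Game.histOf p n).map Prod.snd).filterMap PB.theAtom?).getD k A.init)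
      ((wordPrefix w (j + 1)).length - 1) = roundSet A P τ w ρ j := by
    have hlen : (wordPrefix w (j + 1)).length - 1 = j := by simp [wordPrefix]
    rw [hp.filterMap_histOf hρ, hcount, hlen]
    refine roundSet_congr (fun k hk => ?_) (fun k hk => ?_)
    · simp [wordPrefix, Nat.lt_succ_of_le hk]
    · simp [Nat.lt_succ_of_le hk]
  rw [hS]

theorem holds_roundSet (hequiv : ∀ q a, (A.delta q a).Equiv (δ' q a)) {p : ℕ → ℕ × PB A.Q}
    (hp : (mcGame (A.withDelta δ') w).IsPlay p)
    (hag : (mcGame (A.withDelta δ') w).Agrees P (follow (A.withDelta δ') w (simStrat A P τ)) p)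
    {ρ : ℕ → A.Q} (hρ : ∀ n i q, p n = (i, .atom q) → ρ i = q) (n : ℕ) :
    ∀ j b, p n = (j + 1, b) → b.Holds P (roundSet A P τ w ρ j) := by
  induction n with
  | zero =>
    intro j b h
    have h0 : p 0 = (0, .atom A.init) := hp.1
    simp [h0] at h
  | succ n ih =>
    intro j b hpn'
    have hmove := hp.mcMove_succ n
    rcases hpn : p n with ⟨i, b₀⟩
    rw [hpn, hpn'] at hmove
    rcases PB.atom_or_node b₀ with ⟨q, rfl⟩ | ⟨c₁, c₂, hb⟩
    · obtain ⟨hji, rfl⟩ := Prod.mk.inj (mcMove_atom_iff.1 hmove)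
      obtain rfl : j = i := by omega
      rw [← hρ n j q hpn]
      exact (hequiv _ _).holds_iff.1 (holds_reach _ _)
    · have hnext := (mcMove_node_iff (A := A.withDelta δ') hb).1 hmove
      have hpn₀ : p n = (j + 1, b₀) := by
        rw [hpn]
        rcases hnext with h | h <;> rw [(Prod.mk.inj h).1]
      have hS := ih j b₀ hpn₀
      by_cases hown : P.Owns b₀
      · have hchoice := hag n (mcGame_turn.2 (by rwa [hpn]))
        rw [follow_simStrat_node hp hρ hpn₀ hb, hpn'] at hchoice
        obtain ⟨-, rfl⟩ := Prod.mk.inj hchoice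
        split_ifs with h₁
        · exact h₁
        · exact ((PB.holds_of_owns hb hown).1 hS).resolve_left h₁
      · obtain ⟨h₁, h₂⟩ := (PB.holds_of_not_owns hb hown).1 hS
        rcases hnext with h | h <;> obtain ⟨-, rfl⟩ := Prod.mk.inj h
        exacts [h₁, h₂]

theorem Game.Wins.simStrat (hequiv : ∀ q a, (A.delta q a).Equiv (δ' q a))
    (hwin : (mcGame A w).Wins P (follow A w τ)) :
    (mcGame (A.withDelta δ') w).Wins P (follow (A.withDelta δ') w (simStrat A P τ)) := by
  refine ⟨fun l x _ _ => follow_simStrat_move (A := A) l x, fun p hp hag => ?_⟩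
  obtain ⟨ρ, hρ⟩ := hp.exists_isSubseqOn
  have hidx := hp.isSubseqOn_iff.1 hρ
  have hround (k : ℕ) : ρ (k + 1) ∈ roundSet A P τ w ρ k := by
    obtain ⟨q, hq⟩ := hp.exists_atom_nth (k + 1)
    rw [hidx _ _ _ hq, ← PB.holds_atom]
    exact holds_roundSet hequiv hp hag hidx _ k _ hq
  obtain ⟨p', hp', hag', hidx'⟩ := exists_play_of_mem_roundSet hwin (hidx 0 0 A.init hp.1) hround
  rw [hp.win_iff hρ, ← hp'.win_iff (hp'.isSubseqOn_iff.2 hidx')]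
  exact hwin.2 p' hp' hag'

end Transfer

section Language
variable {A : AltAutomaton Sig Gam} {w : ℕ → Sig} {P : Player}

theorem mcMove_eq_of_snd_eq {x y y' : ℕ × PB A.Q} (h : mcMove A w x y) (h' : mcMove A w x y')
    (hs : y.2 = y'.2) : y = y' := by
  rcases x with ⟨i, b⟩
  rcases PB.atom_or_node b with ⟨q, rfl⟩ | ⟨c₁, c₂, hb⟩
  · rw [mcMove_atom_iff.1 h, mcMove_atom_iff.1 h']
  · refine Prod.ext ?_ hs
    rcases (mcMove_node_iff hb).1 h with rfl | rfl <;>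
      rcases (mcMove_node_iff hb).1 h' with rfl | rfl <;> rfl

theorem eq_of_map_snd_eq {l l' : List (ℕ × PB A.Q)} (hh : l.head? = l'.head?)
    (hc : l.IsChain (mcMove A w)) (hc' : l'.IsChain (mcMove A w))
    (h : l.map Prod.snd = l'.map Prod.snd) : l = l' := by
  induction l generalizing l' with
  | nil => exact (List.map_eq_nil_iff.1 h.symm).symm
  | cons a t ih =>
    rcases l' with _ | ⟨a', t'⟩
    · simp at h
    obtain rfl : a = a' := by simpa using hh
    simp only [List.map_cons, List.cons.injEq, true_and] at h
    congr 1
    rcases t with _ | ⟨b, s⟩ <;> rcases t' with _ | ⟨b', s'⟩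
    · rfl
    · simp at h
    · simp at h
    · rw [List.isChain_cons_cons] at hc hc'
      simp only [List.map_cons, List.cons.injEq] at h
      have hb : b = b' := mcMove_eq_of_snd_eq hc.1 hc'.1 h.1
      exact ih (by simp [hb]) hc.2 hc'.2 (by simp [h])

/-- A strategy in `G(w, A)` read as a uniform strategy, which is possible because a history is
determined by its formulas. -/
noncomputable def uniformOf (A : AltAutomaton Sig Gam) (w : ℕ → Sig)
    (σ : List (ℕ × PB A.Q) → ℕ × PB A.Q) : UStrat Sig A.Q :=
  fun _ h => (σ (Classical.epsilon fun l => (mcGame A w).IsHist l ∧ l.map Prod.snd = h)).2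

theorem follow_uniformOf {σ : List (ℕ × PB A.Q) → ℕ × PB A.Q} (hσ : (mcGame A w).Wins P σ)
    {l : List (ℕ × PB A.Q)} (hl : (mcGame A w).IsHist l) {x : ℕ × PB A.Q}
    (hx : l.getLast? = some x) (ht : (mcGame A w).Turn P x) :
    follow A w (uniformOf A w σ) l = σ l := by
  have hmove := hσ.move hl hx ht
  rcases x with ⟨i, b⟩
  rcases PB.atom_or_node b with ⟨q, rfl⟩ | ⟨c₁, c₂, hb⟩
  · rw [follow_atom hx, mcMove_atom_iff.1 hmove]
  · have hspec := Classical.epsilon_spec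
      (p := fun l' => (mcGame A w).IsHist l' ∧ l'.map Prod.snd = l.map Prod.snd) ⟨l, hl, rfl⟩
    have heq := eq_of_map_snd_eq (by rw [hspec.1.1, hl.1]) hspec.1.2 hl.2 hspec.2
    rw [follow_node hx hb, uniformOf, heq]
    rcases (mcMove_node_iff hb).1 hmove with h | h <;> rw [h]

theorem Game.Wins.uniformOf {σ : List (ℕ × PB A.Q) → ℕ × PB A.Q} (h : (mcGame A w).Wins P σ) :
    (mcGame A w).Wins P (follow A w (uniformOf A w σ)) :=
  ⟨fun l x hl ht => by
    rw [follow_uniformOf h hl List.getLast?_concat ht]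
    exact h.1 l x hl ht,
  fun p hp hag => h.2 p hp fun n ht =>
    (hag n ht).trans (follow_uniformOf h (hp.isHist n) (Game.histOf_getLast? p n) ht)⟩

theorem AltAutomaton.Accepts.withDelta [Nonempty Sig] {δ' : A.Q → Sig → PB A.Q}
    (hequiv : ∀ q a, (A.delta q a).Equiv (δ' q a)) (h : A.Accepts w) :
    (A.withDelta δ').Accepts w := by
  obtain ⟨σ, hσ⟩ := h
  exact ⟨_, Game.wins_eve_iff.1 ((Game.wins_eve_iff.2 hσ).uniformOf.simStrat hequiv)⟩

theorem lang_withDelta [Nonempty Sig] {δ' : A.Q → Sig → PB A.Q}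
    (hequiv : ∀ q a, (A.delta q a).Equiv (δ' q a)) : (A.withDelta δ').lang = A.lang :=
  Set.ext fun _ => ⟨AltAutomaton.Accepts.withDelta (A := A.withDelta δ')
    (fun q a => (hequiv q a).symm), AltAutomaton.Accepts.withDelta hequiv⟩

def HistDet (P : Player) (A : AltAutomaton Sig Gam) : Prop :=
  ∃ τ : UStrat Sig A.Q, ∀ w, (w ∈ A.lang ↔ P = .eve) → (mcGame A w).Wins P (follow A w τ)

theorem nondetHD_iff_histDet : NondetHD A ↔ HistDet .eve A := by
  simp [NondetHD, HistDet, Game.wins_eve_iff]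

theorem univHD_iff_histDet : UnivHD A ↔ HistDet .adam A := by
  simp [UnivHD, HistDet, Game.wins_adam_iff]

theorem HistDet.withDelta [Nonempty Sig] {δ' : A.Q → Sig → PB A.Q}
    (hequiv : ∀ q a, (A.delta q a).Equiv (δ' q a)) (h : HistDet P A) :
    HistDet P (A.withDelta δ') := by
  obtain ⟨τ, hτ⟩ := h
  exact ⟨simStrat A P τ, fun w hw => (hτ w (by rwa [lang_withDelta hequiv] at hw)).simStrat hequiv⟩

end Language

theorem statement4_general {Sig Gam : Type} [Nonempty Sig]
    (A : AltAutomaton Sig Gam)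
    (delta' : A.Q → Sig → PB A.Q)
    (hequiv : ∀ q a, (A.delta q a).Equiv (delta' q a)) :
    (NondetHD A ↔ NondetHD { A with delta := delta' }) ∧
    (UnivHD A ↔ UnivHD { A with delta := delta' }) := by
  have hsymm : ∀ q a, (delta' q a).Equiv (A.delta q a) := fun q a => (hequiv q a).symm
  simp only [nondetHD_iff_histDet, univHD_iff_histDet]
  exact ⟨⟨HistDet.withDelta hequiv, HistDet.withDelta (A := A.withDelta delta') hsymm⟩,
    ⟨HistDet.withDelta hequiv, HistDet.withDelta (A := A.withDelta delta') hsymm⟩⟩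

/-- Replacing transition conditions by equivalent positive boolean formulas
preserves history-determinism of the nondeterminism and of the universality. -/
theorem statement4 {Sig Gam : Type} [Fintype Sig] [Nonempty Sig] [Fintype Gam] [Nonempty Gam]
    (A : AltAutomaton Sig Gam) (hreg : OmegaRegular A.W)
    (delta' : A.Q → Sig → PB A.Q)
    (hequiv : ∀ q a, (A.delta q a).Equiv (delta' q a)) :
    (NondetHD A ↔ NondetHD { A with delta := delta' }) ∧
    (UnivHD A ↔ UnivHD { A with delta := delta' }) :=
  statement4_general A delta' hequiv

end GFG
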